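/- arXiv:2204.06796 — 2 statements merged into one kernel-verified Lean document; each statement's English description precedes it below -/
import Mathlib

section
/- Let f : [0,∞) → ℝ be twice continuously differentiable with compact support, and let p : [0,1] → ℝ be defined by p(x) = f(−log x) for x ∈ (0,1] and p(0) = 0. For n ≥ 1 define f_n(x) = Σ_{r=1}^n C(n,r) f(−log(r/n)) e^{−rx}(1 − e^{−x})^{n−r} for x ≥ 0, where C(n,r) is the binomial coefficient. Then f_n(x) = B_n(p, e^{−x}) for all x ≥ 0, where B_n(p,y) = Σ_{r=0}^n p(r/n) C(n,r) y^r (1−y)^{n−r} is the n-th Bernstein polynomial of p, and moreover f_n → f and f_n′ → f′ uniformly on [0,∞) as n → ∞. -/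
/-!
Substituting `y = e^{-x}` turns `f_n` into the Bernstein polynomial `B_n(p, ·)`, and `p` is
continuous on `[0,1]` because `f` vanishes near infinity; Bernstein's theorem gives `f_n → f`.
For the derivatives, `d/dy B_{n+1}(p, y)` is a Bernstein sum of degree `n` with coefficients
`(n+1)(p((k+1)/(n+1)) - p(k/(n+1))) = p'(ξ_k)`, where by the mean value theorem `ξ_k` lies within
`1/(n+1)` of `k/n`. Since `p'(y) = -f'(-log y)/y` is again continuous on `[0,1]`, uniform
continuity of `p'` and Bernstein's theorem for `p'` give `B_{n+1}'(p, ·) → p'` uniformly on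
`[0,1]`, and `f_{n+1}'(x) = -e^{-x} B_{n+1}'(p, e^{-x})` converges to `-e^{-x} p'(e^{-x}) = f'(x)`.
-/

open MeasureTheory Filter Set

/-- The `n`-th Bernstein polynomial of a function `p` on `[0,1]`. -/
noncomputable def bernsteinPoly (p : ℝ → ℝ) (n : ℕ) (y : ℝ) : ℝ :=
  ∑ r ∈ Finset.range (n + 1),
    p ((r : ℝ) / n) * (n.choose r : ℝ) * y ^ r * (1 - y) ^ (n - r)

/-- The approximating sequence `f_n(x) = Σ_{r=1}^n C(n,r) f(−log(r/n)) e^{−rx}(1−e^{−x})^{n−r}`. -/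
noncomputable def fseq (f : ℝ → ℝ) (n : ℕ) (x : ℝ) : ℝ :=
  ∑ r ∈ Finset.Icc 1 n,
    (n.choose r : ℝ) * f (-Real.log ((r : ℝ) / n)) *
      Real.exp (-(r : ℝ) * x) * (1 - Real.exp (-x)) ^ (n - r)

open Topology

theorem TendstoUniformlyOn.of_comp_add_one {α β : Type*} [UniformSpace β] {F : ℕ → α → β}
    {f : α → β} {s : Set α} (h : TendstoUniformlyOn (fun n => F (n + 1)) f atTop s) :
    TendstoUniformlyOn F f atTop s := fun u hu => by
  rw [← map_add_atTop_eq_nat 1]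
  exact h u hu

theorem TendstoUniformlyOn.mul_left_of_bounded {ι α : Type*} {F : ι → α → ℝ} {f : α → ℝ}
    {l : Filter ι} {s : Set α} (h : TendstoUniformlyOn F f l s) {a : α → ℝ} {C : ℝ}
    (ha : ∀ x ∈ s, |a x| ≤ C) :
    TendstoUniformlyOn (fun n x => a x * F n x) (fun x => a x * f x) l s := by
  rw [Metric.tendstoUniformlyOn_iff] at h ⊢
  intro ε hε
  filter_upwards [h (ε / (|C| + 1)) (by positivity)] with n hn x hx
  rw [Real.dist_eq, ← mul_sub, abs_mul, ← Real.dist_eq]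
  calc |a x| * dist (f x) (F n x) ≤ (|C| + 1) * dist (f x) (F n x) := by
        gcongr; linarith [ha x hx, le_abs_self C]
    _ < (|C| + 1) * (ε / (|C| + 1)) := by gcongr; exact hn x hx
    _ = ε := by field_simp

noncomputable def bernsteinSum (c : ℕ → ℝ) (n : ℕ) (y : ℝ) : ℝ :=
  ∑ k ∈ Finset.range (n + 1), c k * n.choose k * y ^ k * (1 - y) ^ (n - k)

section BernsteinSum

open Finset Polynomial

theorem bernsteinSum_eq_eval (c : ℕ → ℝ) (n : ℕ) (y : ℝ) :
    bernsteinSum c n y = (∑ k ∈ range (n + 1), c k • bernsteinPolynomial ℝ n k).eval y := by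
  simp [bernsteinSum, eval_finsetSum, bernsteinPolynomial, mul_assoc]

theorem bernsteinSum_congr {c d : ℕ → ℝ} {n : ℕ} (h : ∀ k ≤ n, c k = d k) :
    bernsteinSum c n = bernsteinSum d n :=
  funext fun _ => sum_congr rfl fun k hk => by rw [h k (Nat.lt_succ_iff.mp (mem_range.mp hk))]

theorem bernsteinSum_const (a : ℝ) (n : ℕ) (y : ℝ) : bernsteinSum (fun _ => a) n y = a := by
  simp [bernsteinSum_eq_eval, ← smul_sum, bernsteinPolynomial.sum]

theorem bernsteinSum_sub (c d : ℕ → ℝ) (n : ℕ) (y : ℝ) :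
    bernsteinSum c n y - bernsteinSum d n y = bernsteinSum (fun k => c k - d k) n y := by
  rw [bernsteinSum, bernsteinSum, bernsteinSum, ← sum_sub_distrib]
  exact sum_congr rfl fun k _ => by ring

theorem abs_bernsteinSum_le {c : ℕ → ℝ} {n : ℕ} {a y : ℝ} (hy : y ∈ Set.Icc 0 1)
    (hc : ∀ k ≤ n, |c k| ≤ a) : |bernsteinSum c n y| ≤ a := by
  calc |bernsteinSum c n y| ≤ bernsteinSum (fun _ => a) n y := by
        refine (abs_sum_le_sum_abs _ _).trans (sum_le_sum fun k hk => ?_)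
        have hw : 0 ≤ (n.choose k : ℝ) * y ^ k * (1 - y) ^ (n - k) :=
          mul_nonneg (mul_nonneg (Nat.cast_nonneg _) (pow_nonneg hy.1 _))
            (pow_nonneg (sub_nonneg.2 hy.2) _)
        calc |c k * n.choose k * y ^ k * (1 - y) ^ (n - k)|
            = |c k| * ((n.choose k : ℝ) * y ^ k * (1 - y) ^ (n - k)) := by
              rw [mul_assoc, mul_assoc, ← mul_assoc (n.choose k : ℝ), abs_mul, abs_of_nonneg hw]
          _ ≤ a * ((n.choose k : ℝ) * y ^ k * (1 - y) ^ (n - k)) :=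
              mul_le_mul_of_nonneg_right (hc k (Nat.lt_succ_iff.mp (mem_range.mp hk))) hw
          _ = a * n.choose k * y ^ k * (1 - y) ^ (n - k) := by ring
    _ = a := bernsteinSum_const a n y

theorem derivative_sum_smul_bernsteinPolynomial (c : ℕ → ℝ) (n : ℕ) :
    derivative (∑ k ∈ range (n + 2), c k • bernsteinPolynomial ℝ (n + 1) k) =
      ∑ k ∈ range (n + 1), ((n + 1) * (c (k + 1) - c k)) • bernsteinPolynomial ℝ n k := by
  have hshift : ∑ k ∈ range (n + 1), c (k + 1) • bernsteinPolynomial ℝ n (k + 1) +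
      c 0 • bernsteinPolynomial ℝ n 0 = ∑ k ∈ range (n + 1), c k • bernsteinPolynomial ℝ n k := by
    rw [← sum_range_succ' (fun k => c k • bernsteinPolynomial ℝ n k), sum_range_succ,
      bernsteinPolynomial.eq_zero_of_lt ℝ n.lt_succ_self, smul_zero, add_zero]
  have hN : ((n + 1 : ℕ) : ℝ[X]) = C ((n : ℝ) + 1) := by simp
  rw [derivative_sum, sum_range_succ' _ (n + 1)]
  simp only [derivative_smul, bernsteinPolynomial.derivative_succ,
    bernsteinPolynomial.derivative_zero, Nat.add_sub_cancel, hN, neg_mul, ← smul_eq_C_mul,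
    smul_sub, mul_smul, sub_smul, sum_sub_distrib, smul_comm (c _) ((n : ℝ) + 1), ← smul_sum]
  rw [← hshift]
  module

theorem hasDerivAt_bernsteinSum_succ (c : ℕ → ℝ) (n : ℕ) (y : ℝ) :
    HasDerivAt (bernsteinSum c (n + 1))
      (bernsteinSum (fun k => (n + 1) * (c (k + 1) - c k)) n y) y := by
  simp only [funext (bernsteinSum_eq_eval c (n + 1)), bernsteinSum_eq_eval]
  rw [← derivative_sum_smul_bernsteinPolynomial]
  exact Polynomial.hasDerivAt _ y

end BernsteinSum

theorem bernsteinPoly_eq_bernsteinApproximation {g : ℝ → ℝ} (G : C(unitInterval, ℝ))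
    (hG : ∀ x, G x = g x) (n : ℕ) (x : unitInterval) :
    bernsteinPoly g n x = bernsteinApproximation n G x := by
  rw [bernsteinApproximation.apply, bernsteinPoly,
    ← Fin.sum_univ_eq_sum_range (fun r => g (r / n) * n.choose r * x ^ r * (1 - x) ^ (n - r))]
  refine Finset.sum_congr rfl fun k _ => ?_
  simp only [bernstein_apply, bernstein.z, hG, smul_eq_mul]
  ring

theorem tendstoUniformlyOn_bernsteinPoly {g : ℝ → ℝ} (hg : ContinuousOn g (Icc 0 1)) :
    TendstoUniformlyOn (bernsteinPoly g) g atTop (Icc 0 1) := by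
  let G : C(unitInterval, ℝ) :=
    ⟨fun x => g x, hg.comp_continuous continuous_subtype_val Subtype.prop⟩
  rw [tendstoUniformlyOn_iff_tendstoUniformly_comp_coe]
  simp only [bernsteinPoly_eq_bernsteinApproximation G fun _ => rfl]
  exact ContinuousMap.tendsto_iff_tendstoUniformly.mp (bernsteinApproximation_uniform G)

theorem tendstoUniformlyOn_bernsteinSum_of_nodes {g : ℝ → ℝ} (hg : ContinuousOn g (Icc 0 1))
    {ξ : ℕ → ℕ → ℝ} {δ : ℕ → ℝ} (hδ : Tendsto δ atTop (𝓝 0))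
    (hξ : ∀ n k, k ≤ n → ξ n k ∈ Icc 0 1 ∧ |ξ n k - k / n| ≤ δ n) :
    TendstoUniformlyOn (fun n => bernsteinSum (fun k => g (ξ n k)) n) g atTop (Icc 0 1) := by
  rw [Metric.tendstoUniformlyOn_iff]
  intro ε hε
  obtain ⟨η, hη, hgη⟩ := Metric.uniformContinuousOn_iff.mp
    (isCompact_Icc.uniformContinuousOn_of_continuous hg) (ε / 2) (half_pos hε)
  filter_upwards [Metric.tendstoUniformlyOn_iff.mp (tendstoUniformlyOn_bernsteinPoly hg) _
    (half_pos hε), hδ.eventually (gt_mem_nhds hη)] with n hB hδn y hy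
  have hnodes : |bernsteinPoly g n y - bernsteinSum (fun k => g (ξ n k)) n y| ≤ ε / 2 := by
    rw [bernsteinPoly, ← bernsteinSum, bernsteinSum_sub]
    refine abs_bernsteinSum_le hy fun k hk => ?_
    have hkn : (k : ℝ) / n ∈ Icc (0 : ℝ) 1 :=
      ⟨by positivity, div_le_one_of_le₀ (by exact_mod_cast hk) n.cast_nonneg⟩
    refine (hgη _ hkn _ (hξ n k hk).1 ?_).le
    rw [dist_comm, Real.dist_eq]
    exact (hξ n k hk).2.trans_lt hδn
  calc dist (g y) (bernsteinSum (fun k => g (ξ n k)) n y)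
      ≤ dist (g y) (bernsteinPoly g n y)
        + dist (bernsteinPoly g n y) (bernsteinSum (fun k => g (ξ n k)) n y) := dist_triangle ..
    _ < ε / 2 + ε / 2 := add_lt_add_of_lt_of_le (hB y hy) hnodes
    _ = ε := add_halves ε

theorem Icc_div_succ_subset_Icc {n k : ℕ} (hk : k ≤ n) :
    Icc ((k : ℝ) / (n + 1)) ((k + 1) / (n + 1)) ⊆ Icc 0 1 :=
  Icc_subset_Icc (by positivity)
    ((div_le_one (by positivity)).2 (by exact_mod_cast Nat.succ_le_succ hk))

theorem exists_hasDerivAt_eq_mul_sub_of_grid {p q : ℝ → ℝ} (hp : ContinuousOn p (Icc 0 1))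
    (hpq : ∀ y ∈ Ioo (0 : ℝ) 1, HasDerivAt p (q y) y) {n k : ℕ} (hk : k ≤ n) :
    ∃ ξ ∈ Ioo ((k : ℝ) / (n + 1)) ((k + 1) / (n + 1)),
      q ξ = (n + 1) * (p ((k + 1) / (n + 1)) - p (k / (n + 1))) := by
  have hlt : (k : ℝ) / (n + 1) < (k + 1) / (n + 1) := by gcongr; linarith
  have hsub := Icc_div_succ_subset_Icc hk
  obtain ⟨ξ, hξ, hq⟩ := exists_hasDerivAt_eq_slope p q hlt (hp.mono hsub) fun z hz =>
    hpq z (Ioo_subset_Ioo (hsub (left_mem_Icc.2 hlt.le)).1 (hsub (right_mem_Icc.2 hlt.le)).2 hz)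
  refine ⟨ξ, hξ, hq.trans ?_⟩
  field_simp
  ring

theorem abs_sub_div_le_of_mem_Ioo {n k : ℕ} (hk : k ≤ n) {ξ : ℝ}
    (hξ : ξ ∈ Ioo ((k : ℝ) / (n + 1)) ((k + 1) / (n + 1))) : |ξ - k / n| ≤ 1 / (n + 1) := by
  rcases Nat.eq_zero_or_pos n with rfl | hn
  · -- here `k / n = 0 / 0 = 0`
    obtain rfl := Nat.le_zero.mp hk
    norm_num at hξ ⊢
    rw [abs_of_pos hξ.1]
    exact hξ.2.le
  have hkn : (k : ℝ) ≤ n := by exact_mod_cast hk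
  have hn' : (0 : ℝ) < n := by exact_mod_cast hn
  obtain ⟨h1, h2⟩ := hξ
  rw [abs_sub_le_iff]
  constructor
  · have : (k + 1 : ℝ) / (n + 1) ≤ k / n + 1 / (n + 1) := by
      rw [div_add_div _ _ hn'.ne' (by positivity), div_le_div_iff₀ (by positivity) (by positivity)]
      nlinarith
    linarith
  · have : (k : ℝ) / n ≤ k / (n + 1) + 1 / (n + 1) := by
      rw [← add_div, div_le_div_iff₀ hn' (by positivity)]
      nlinarith
    linarith

theorem derivWithin_eventuallyEq_zero_atTop {f : ℝ → ℝ} (hf : f =ᶠ[atTop] 0) (s : Set ℝ) :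
    derivWithin f s =ᶠ[atTop] 0 := by
  obtain ⟨M, hM⟩ := eventually_atTop.1 hf
  filter_upwards [eventually_gt_atTop M] with x hx
  have hloc : f =ᶠ[𝓝[s] x] fun _ => 0 :=
    nhdsWithin_le_nhds ((eventually_gt_nhds hx).mono fun z hz => hM z hz.le)
  rw [hloc.derivWithin_eq (hM x hx.le), derivWithin_fun_const]

theorem continuousOn_Icc_of_eq_comp_neg_log {h F : ℝ → ℝ} (hh : ContinuousOn h (Ici 0))
    (hh_top : Tendsto h atTop (𝓝 0)) (hF : ∀ y ∈ Ioc (0 : ℝ) 1, F y = h (-Real.log y))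
    (hF0 : F 0 = 0) : ContinuousOn F (Icc 0 1) := by
  have hlog : ∀ y ∈ Ioc (0 : ℝ) 1, -Real.log y ∈ Ici 0 := fun y hy =>
    neg_nonneg.2 (Real.log_nonpos hy.1.le hy.2)
  have hIoc : ContinuousOn F (Ioc 0 1) :=
    ((hh.comp (Real.continuousOn_log.mono fun y hy => hy.1.ne').neg hlog).congr hF)
  intro y hy
  rcases hy.1.eq_or_lt with rfl | hy0
  · rw [← continuousWithinAt_sdiff_self, Icc_sdiff_left, ContinuousWithinAt, hF0]
    refine (hh_top.comp ?_).congr' (eventually_nhdsWithin_of_forall fun z hz => (hF z hz).symm)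
    exact tendsto_neg_atBot_atTop.comp (Real.tendsto_log_nhdsGT_zero.mono_left
      (nhdsWithin_mono _ Ioc_subset_Ioi_self))
  · exact (hIoc y ⟨hy0, hy.2⟩).mono_of_mem_nhdsWithin
      (mem_nhdsWithin.2 ⟨Ioi 0, isOpen_Ioi, hy0, fun z hz => ⟨hz.1, hz.2.2⟩⟩)

theorem mapsTo_exp_neg_Ici : MapsTo (fun x => Real.exp (-x)) (Ici 0) (Ioc 0 1) := fun _ hx =>
  ⟨Real.exp_pos _, Real.exp_le_one_iff.2 (neg_nonpos.2 hx)⟩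

/-- The derivative of `y ↦ f (-log y)`; its value at `0` is `0` because `x / 0 = 0`. -/
noncomputable def derivCompNegLog (f : ℝ → ℝ) (y : ℝ) : ℝ :=
  -derivWithin f (Ici 0) (-Real.log y) / y

section

variable {f p : ℝ → ℝ}

theorem fseq_eq_bernsteinPoly (hp : ∀ y ∈ Ioc (0 : ℝ) 1, p y = f (-Real.log y))
    (hp0 : p 0 = 0) (n : ℕ) (x : ℝ) : fseq f n x = bernsteinPoly p n (Real.exp (-x)) := by
  rw [fseq, bernsteinPoly, Finset.range_eq_Ico, Finset.sum_eq_sum_Ico_succ_bot n.succ_pos]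
  simp only [Nat.cast_zero, zero_div, hp0, zero_mul, zero_add]
  refine Finset.sum_congr rfl fun r hr => ?_
  obtain ⟨hr1, hrn⟩ := Finset.mem_Ico.mp hr
  have hmem : (r : ℝ) / n ∈ Ioc (0 : ℝ) 1 :=
    ⟨div_pos (Nat.cast_pos.2 hr1) (Nat.cast_pos.2 (by omega)),
      div_le_one_of_le₀ (by exact_mod_cast Nat.lt_succ_iff.mp hrn) n.cast_nonneg⟩
  rw [hp _ hmem, ← Real.exp_nat_mul, mul_neg, ← neg_mul]
  ring

theorem hasDerivAt_fseq_succ (hp : ∀ y ∈ Ioc (0 : ℝ) 1, p y = f (-Real.log y)) (hp0 : p 0 = 0)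
    (n : ℕ) (x : ℝ) :
    HasDerivAt (fseq f (n + 1)) (-Real.exp (-x) * bernsteinSum
      (fun k => (n + 1) * (p ((k + 1) / (n + 1)) - p (k / (n + 1)))) n (Real.exp (-x))) x := by
  have hB : bernsteinPoly p (n + 1) = bernsteinSum (fun k => p (k / (n + 1))) (n + 1) := by
    funext y
    simp [bernsteinPoly, bernsteinSum]
  have hfseq : fseq f (n + 1) = bernsteinPoly p (n + 1) ∘ fun x => Real.exp (-x) :=
    funext (fseq_eq_bernsteinPoly hp hp0 (n + 1))
  have hexp : HasDerivAt (fun x => Real.exp (-x)) (-Real.exp (-x)) x := by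
    simpa using (hasDerivAt_neg x).exp
  rw [hfseq, hB]
  refine ((hasDerivAt_bernsteinSum_succ _ n _).comp x hexp).congr_deriv ?_
  push_cast
  ring

theorem continuousOn_derivCompNegLog (hf : ContDiffOn ℝ 1 f (Ici 0)) (hsupp : f =ᶠ[atTop] 0) :
    ContinuousOn (derivCompNegLog f) (Icc 0 1) := by
  refine continuousOn_Icc_of_eq_comp_neg_log (h := fun z => -derivWithin f (Ici 0) z * Real.exp z)
    ?_ ?_ (fun y hy => ?_) (div_zero _)
  · exact ((hf.continuousOn_derivWithin (uniqueDiffOn_Ici 0) le_rfl).neg).mul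
      Real.continuous_exp.continuousOn
  · refine tendsto_const_nhds.congr' ?_
    filter_upwards [derivWithin_eventuallyEq_zero_atTop hsupp (Ici 0)] with z hz
    simp [hz]
  · rw [derivCompNegLog, Real.exp_neg, Real.exp_log hy.1, div_eq_mul_inv]

theorem hasDerivAt_derivCompNegLog (hf : ContDiffOn ℝ 1 f (Ici 0))
    (hp : ∀ y ∈ Ioc (0 : ℝ) 1, p y = f (-Real.log y)) {y : ℝ} (hy : y ∈ Ioo (0 : ℝ) 1) :
    HasDerivAt p (derivCompNegLog f y) y := by
  have hlog : Ici (0 : ℝ) ∈ 𝓝 (-Real.log y) :=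
    Ici_mem_nhds (neg_pos.2 (Real.log_neg hy.1 hy.2))
  have hfx : HasDerivAt f (derivWithin f (Ici 0) (-Real.log y)) (-Real.log y) := by
    rw [derivWithin_of_mem_nhds hlog]
    exact ((hf.differentiableOn one_ne_zero).differentiableAt hlog).hasDerivAt
  have hp_eq : p =ᶠ[𝓝 y] fun z => f (-Real.log z) :=
    eventually_of_mem (Ioo_mem_nhds hy.1 hy.2) fun z hz => hp z (Ioo_subset_Ioc_self hz)
  have hcomp := (hfx.comp y (Real.hasDerivAt_log hy.1.ne').neg).congr_of_eventuallyEq hp_eq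
  refine hcomp.congr_deriv ?_
  rw [derivCompNegLog]
  field_simp

theorem tendstoUniformlyOn_fseq (hpc : ContinuousOn p (Icc 0 1))
    (hp : ∀ y ∈ Ioc (0 : ℝ) 1, p y = f (-Real.log y)) (hp0 : p 0 = 0) :
    TendstoUniformlyOn (fseq f) f atTop (Ici 0) := by
  have hB := ((tendstoUniformlyOn_bernsteinPoly hpc).comp _).mono
    (mapsTo_exp_neg_Ici.mono_right Ioc_subset_Icc_self)
  refine (hB.congr (Eventually.of_forall fun n x _ => ?_)).congr_right fun x hx => ?_
  · exact (fseq_eq_bernsteinPoly hp hp0 n x).symm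
  · simp [hp _ (mapsTo_exp_neg_Ici hx)]

theorem tendstoUniformlyOn_deriv_fseq (hf : ContDiffOn ℝ 1 f (Ici 0)) (hsupp : f =ᶠ[atTop] 0)
    (hpc : ContinuousOn p (Icc 0 1)) (hp : ∀ y ∈ Ioc (0 : ℝ) 1, p y = f (-Real.log y))
    (hp0 : p 0 = 0) :
    TendstoUniformlyOn (fun n => deriv (fseq f n)) (derivWithin f (Ici 0)) atTop (Ici 0) := by
  have hnodes : ∀ n k : ℕ, ∃ ξ : ℝ, k ≤ n → ξ ∈ Ioo ((k : ℝ) / (n + 1)) ((k + 1) / (n + 1)) ∧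
      derivCompNegLog f ξ = (n + 1) * (p ((k + 1) / (n + 1)) - p (k / (n + 1))) := by
    intro n k
    by_cases hk : k ≤ n
    · obtain ⟨ξ, hξ, hq⟩ := exists_hasDerivAt_eq_mul_sub_of_grid hpc
        (fun y hy => hasDerivAt_derivCompNegLog hf hp hy) hk
      exact ⟨ξ, fun _ => ⟨hξ, hq⟩⟩
    · exact ⟨0, fun h => absurd h hk⟩
  choose ξ hξ using hnodes
  have hG := tendstoUniformlyOn_bernsteinSum_of_nodes (continuousOn_derivCompNegLog hf hsupp)
    tendsto_one_div_add_atTop_nhds_zero_nat fun n k hk =>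
      ⟨Ioo_subset_Icc_self.trans (Icc_div_succ_subset_Icc hk) (hξ n k hk).1,
        abs_sub_div_le_of_mem_Ioo hk (hξ n k hk).1⟩
  have hlim := ((hG.comp _).mono (mapsTo_exp_neg_Ici.mono_right Ioc_subset_Icc_self))
    |>.mul_left_of_bounded (a := fun x => -Real.exp (-x)) (C := 1) fun x hx => by
      simpa [abs_of_pos (Real.exp_pos _)] using (mapsTo_exp_neg_Ici hx).2
  refine TendstoUniformlyOn.of_comp_add_one
    ((hlim.congr (Eventually.of_forall fun n x _ => ?_)).congr_right fun x _ => ?_)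
  · rw [(hasDerivAt_fseq_succ hp hp0 n x).deriv, bernsteinSum_congr fun k hk => (hξ n k hk).2]
    rfl
  · simp only [Function.comp_apply, derivCompNegLog, Real.log_exp, neg_neg]
    field_simp

end

/-- with `p(x) = f(−log x)` on `(0,1]`, `p(0)=0`, one has
`f_n(x) = B_n(p, e^{−x})` for all `x ≥ 0`, and `f_n → f`, `f_n′ → f′` uniformly on `[0,∞)`. -/
theorem stmt4 (f p : ℝ → ℝ)
    (hf : ContDiffOn ℝ 2 f (Ici 0))
    (hsupp : ∃ M : ℝ, ∀ x, M ≤ x → f x = 0)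
    (hp : ∀ x ∈ Ioc (0 : ℝ) 1, p x = f (-Real.log x))
    (hp0 : p 0 = 0) :
    (∀ n : ℕ, 1 ≤ n → ∀ x : ℝ, 0 ≤ x → fseq f n x = bernsteinPoly p n (Real.exp (-x))) ∧
    TendstoUniformlyOn (fun n => fseq f n) f atTop (Ici 0) ∧
    TendstoUniformlyOn (fun n x => deriv (fseq f n) x)
      (fun x => derivWithin f (Ici 0) x) atTop (Ici 0) := by
  have hsupp' : f =ᶠ[atTop] 0 := eventually_atTop.2 hsupp
  have hpc : ContinuousOn p (Icc 0 1) := continuousOn_Icc_of_eq_comp_neg_log hf.continuousOn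
    (tendsto_const_nhds.congr' hsupp'.symm) hp hp0
  exact ⟨fun n _ x _ => fseq_eq_bernsteinPoly hp hp0 n x, tendstoUniformlyOn_fseq hpc hp hp0,
    tendstoUniformlyOn_deriv_fseq (hf.of_le one_le_two) hsupp' hpc hp hp0⟩
end

section
/- Assume condition (A) and set u_k(λ) = k[1 − g_k(e^{−λ/k})] for λ ≥ 0. Then for every a ≥ 0, u_k(λ) → λ uniformly on [0,a] as k → ∞. -/
open MeasureTheory Filter Set

/-- `pgfEval p s = Σ_j p_j s^j` is the generating function of the sequence `p`. -/
noncomputable def pgfEval (p : ℕ → ℝ) (s : ℝ) : ℝ := ∑' j : ℕ, p j * s ^ j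

/-- `p` is (the coefficient sequence of) a probability generating function. -/
def IsPGF (p : ℕ → ℝ) : Prop := (∀ j, 0 ≤ p j) ∧ (∑' j : ℕ, p j) = 1

/-!
With `v_k(λ) = k(1 - e^{-λ/k})` we have `1 - v_k(λ)/k = e^{-λ/k}`, hence
`u_k(λ) = v_k(λ) - R_k(v_k(λ)) / γ_k`.
On `[0, a]` the map `v_k` takes values in `[0, a]` and is within `a²/k` of the identity.
Since `R_k(0) = 0`, the uniform Lipschitz bound of condition (A) bounds `|R_k(v_k(λ))|` uniformly
in `k` and `λ`, so the correction term is `O(1/γ_k)` uniformly, and `γ_k → ∞`.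
-/

theorem LipschitzOnWith.norm_le_mul {E F : Type*} [SeminormedAddGroup E] [SeminormedAddGroup F]
    {f : E → F} {K : NNReal} {s : Set E} (hf : LipschitzOnWith K f s) (h0 : 0 ∈ s) (hf0 : f 0 = 0)
    {x : E} (hx : x ∈ s) : ‖f x‖ ≤ K * ‖x‖ := by
  simpa only [dist_zero_right, hf0] using hf.dist_le_mul x hx 0 h0

theorem IsPGF.pgfEval_one {p : ℕ → ℝ} (hp : IsPGF p) : pgfEval p 1 = 1 := by
  simp [pgfEval, hp.2]

section UniformConvergence

variable {ι α : Type*} {l : Filter ι} {s : Set α}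

theorem tendstoUniformlyOn_of_dist_le {β : Type*} [PseudoMetricSpace β] {F : ι → α → β}
    {f : α → β} {b : ι → ℝ} (hb : Tendsto b l (nhds 0))
    (hFb : ∀ᶠ i in l, ∀ x ∈ s, dist (f x) (F i x) ≤ b i) : TendstoUniformlyOn F f l s := by
  rw [Metric.tendstoUniformlyOn_iff]
  intro ε hε
  filter_upwards [hFb, hb.eventually (gt_mem_nhds hε)] with i hFi hbi x hx
  exact (hFi x hx).trans_lt hbi

theorem tendstoUniformlyOn_div_of_abs_le_of_tendsto_atTop {G : ι → α → ℝ} {γ : ι → ℝ}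
    {C : ℝ} (hG : ∀ᶠ i in l, ∀ x ∈ s, |G i x| ≤ C) (hγ : Tendsto γ l atTop) :
    TendstoUniformlyOn (fun i x => G i x / γ i) 0 l s := by
  refine tendstoUniformlyOn_of_dist_le ((tendsto_const_nhds (x := C)).div_atTop hγ) ?_
  filter_upwards [hG, hγ.eventually_gt_atTop 0] with i hGi hγi x hx
  rw [Pi.zero_apply, dist_zero_left, Real.norm_eq_abs, abs_div, abs_of_pos hγi]
  exact div_le_div_of_nonneg_right (hGi x hx) hγi.le

end UniformConvergence

section ExpApproximation

open Real

theorem mul_one_sub_exp_neg_div_mem_Icc {x k : ℝ} (hx : 0 ≤ x) (hk : 0 < k) :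
    k * (1 - exp (-x / k)) ∈ Icc 0 x := by
  have hle : exp (-x / k) ≤ 1 :=
    exp_le_one_iff.mpr (div_nonpos_of_nonpos_of_nonneg (neg_nonpos.mpr hx) hk.le)
  have hge : 1 - x / k ≤ exp (-x / k) := by
    linarith [add_one_le_exp (-x / k), neg_div k x]
  refine ⟨mul_nonneg hk.le (by linarith), ?_⟩
  calc k * (1 - exp (-x / k)) ≤ k * (x / k) := by gcongr; linarith
    _ = x := by field_simp

theorem abs_sub_mul_one_sub_exp_neg_div_le {x k : ℝ} (hk : 0 < k) (hx : |x| ≤ k) :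
    |x - k * (1 - exp (-x / k))| ≤ x ^ 2 / k := by
  have hxk : |-x / k| ≤ 1 := by
    rw [abs_div, abs_neg, abs_of_pos hk]
    exact div_le_one_of_le₀ hx hk.le
  have hsub : x - k * (1 - exp (-x / k)) = k * (exp (-x / k) - 1 - -x / k) := by
    field_simp
    ring
  rw [hsub, abs_mul, abs_of_pos hk]
  calc k * |exp (-x / k) - 1 - -x / k| ≤ k * (-x / k) ^ 2 := by
        gcongr
        exact abs_exp_sub_one_sub_id_le hxk
    _ = x ^ 2 / k := by field_simp

theorem tendstoUniformlyOn_natCast_mul_one_sub_exp_neg_div (a : ℝ) :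
    TendstoUniformlyOn (fun (k : ℕ) x => (k : ℝ) * (1 - exp (-x / k))) id atTop
      (Metric.closedBall 0 a) := by
  refine tendstoUniformlyOn_of_dist_le (tendsto_const_div_atTop_nhds_zero_nat (a ^ 2)) ?_
  filter_upwards [tendsto_natCast_atTop_atTop.eventually_ge_atTop (max a 1)] with k hk x hx
  rw [mem_closedBall_zero_iff, Real.norm_eq_abs] at hx
  have hk0 : (0 : ℝ) < k := by linarith [le_max_right a 1]
  calc dist (id x) ((k : ℝ) * (1 - exp (-x / k))) ≤ x ^ 2 / k :=
        abs_sub_mul_one_sub_exp_neg_div_le hk0 (hx.trans ((le_max_left a 1).trans hk))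
    _ ≤ a ^ 2 / k := by
        refine div_le_div_of_nonneg_right ?_ hk0.le
        rw [← sq_abs]
        exact pow_le_pow_left₀ (abs_nonneg x) hx 2

end ExpApproximation

theorem mul_one_sub_eq_sub_div {G : ℝ → ℝ} {k γ s t : ℝ} (hk : k ≠ 0) (hγ : γ ≠ 0)
    (hts : 1 - t / k = s) :
    k * (1 - G s) = t - k * γ * (G (1 - t / k) - (1 - t / k)) / γ := by
  rw [hts]
  have ht : t = k * (1 - s) := by
    rw [← hts]
    field_simp
    ring
  rw [ht]
  field_simp
  ring

theorem stmt9_general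
    (γ : ℕ → ℝ)
    (hγtop : Tendsto γ atTop atTop)
    (gp : ℕ → ℕ → ℝ) (hgp : ∀ k, 1 ≤ k → IsPGF (gp k))
    -- condition (A)
    (condA1 : ∀ a : ℝ, 0 < a → ∃ L : NNReal, ∀ k : ℕ, 1 ≤ k → a ≤ (k : ℝ) →
      LipschitzOnWith L
        (fun l => (k : ℝ) * γ k * (pgfEval (gp k) (1 - l / k) - (1 - l / k)))
        (Icc 0 a)) :
    ∀ a : ℝ, 0 ≤ a →
      TendstoUniformlyOn
        (fun (k : ℕ) (l : ℝ) => (k : ℝ) * (1 - pgfEval (gp k) (Real.exp (-l / k))))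
        (fun l => l) atTop (Icc 0 a) := by
  intro a ha
  obtain ⟨L, hL⟩ := condA1 (a + 1) (by linarith)
  set Rk := fun (k : ℕ) (l : ℝ) => (k : ℝ) * γ k * (pgfEval (gp k) (1 - l / k) - (1 - l / k))
  set v := fun (k : ℕ) (l : ℝ) => (k : ℝ) * (1 - Real.exp (-l / k))
  have hv : TendstoUniformlyOn v id atTop (Icc 0 a) :=
    (tendstoUniformlyOn_natCast_mul_one_sub_exp_neg_div a).mono fun x hx => by
      rw [mem_closedBall_zero_iff, Real.norm_eq_abs, abs_le]
      exact ⟨by linarith [hx.1], hx.2⟩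
  have hRv : ∀ᶠ k in atTop, ∀ l ∈ Icc 0 a, |Rk k (v k l)| ≤ L * (a + 1) := by
    filter_upwards [eventually_ge_atTop 1,
      tendsto_natCast_atTop_atTop.eventually_ge_atTop (a + 1)] with k hk hka l hl
    have hvl := mul_one_sub_exp_neg_div_mem_Icc hl.1 (by positivity : (0 : ℝ) < k)
    have hvmem : v k l ∈ Icc 0 (a + 1) := ⟨hvl.1, by linarith [hvl.2, hl.2]⟩
    have hR0 : Rk k 0 = 0 := by simp [Rk, (hgp k hk).pgfEval_one]
    calc |Rk k (v k l)| ≤ L * |v k l| := (hL k hk hka).norm_le_mul ⟨le_rfl, by linarith⟩ hR0 hvmem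
      _ ≤ L * (a + 1) := by rw [abs_of_nonneg hvl.1]; gcongr; exact hvmem.2
  have h := hv.fun_sub (tendstoUniformlyOn_div_of_abs_le_of_tendsto_atTop hRv hγtop)
  simp only [id, Pi.zero_apply, sub_zero] at h
  refine h.congr ?_
  filter_upwards [eventually_ge_atTop 1, hγtop.eventually_gt_atTop 0] with k hk hγk l _
  have hk0 : (k : ℝ) ≠ 0 := by positivity
  refine (mul_one_sub_eq_sub_div hk0 hγk.ne' ?_).symm
  simp only [v]
  field_simp
  ring

/-- under condition (A), `u_k(λ) = k[1 − g_k(e^{−λ/k})]` converges to `λ`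
uniformly on `[0,a]` for every `a ≥ 0`. -/
theorem stmt9
    (b c : ℝ) (hc : 0 ≤ c)
    (m : Measure ℝ) (hm : IntegrableOn (fun z => min z (z ^ 2)) (Ioi 0) m)
    (R : ℝ → ℝ)
    (hR : ∀ l, 0 ≤ l →
      R l = b * l + c * l ^ 2 + ∫ z in Ioi 0, (Real.exp (-l * z) - 1 + l * z) ∂m)
    (γ : ℕ → ℝ) (hγpos : ∀ k, 1 ≤ k → 0 < γ k) (hγmono : Monotone γ)
    (hγtop : Tendsto γ atTop atTop)
    (gp : ℕ → ℕ → ℝ) (hgp : ∀ k, 1 ≤ k → IsPGF (gp k))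
    -- condition (A)
    (condA1 : ∀ a : ℝ, 0 < a → ∃ L : NNReal, ∀ k : ℕ, 1 ≤ k → a ≤ (k : ℝ) →
      LipschitzOnWith L
        (fun l => (k : ℝ) * γ k * (pgfEval (gp k) (1 - l / k) - (1 - l / k)))
        (Icc 0 a))
    (condA2 : ∀ l : ℝ, 0 ≤ l →
      Tendsto (fun k : ℕ => (k : ℝ) * γ k * (pgfEval (gp k) (1 - l / k) - (1 - l / k)))
        atTop (nhds (R l))) :
    ∀ a : ℝ, 0 ≤ a →
      TendstoUniformlyOn
        (fun (k : ℕ) (l : ℝ) => (k : ℝ) * (1 - pgfEval (gp k) (Real.exp (-l / k))))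
        (fun l => l) atTop (Icc 0 a) :=
  stmt9_general γ hγtop gp hgp condA1
end
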